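/- arXiv:2509.24284 — 2 statements merged into one kernel-verified Lean document; each statement's English description precedes it below -/
import Mathlib

section
/- Up to Z/2-equivariant affine isomorphism, every affine involution on a torus T = V/Λ whose linear part is an indecomposable integral representation of Z/2 is one of exactly four types: (1) T = R/Z with σ(t) = t; (2) T = R/Z with σ(t) = t + 1/2; (3) T = R/Z with σ(t) = -t; (4) T = R²/Z² with σ(t₁,t₂) = (t₂,t₁). -/
open scoped TensorProduct

/-- The real vector space `V = ℝ ⊗_ℤ Λ` spanned by the lattice `Λ`. -/
abbrev VR (Λ : Type) [AddCommGroup Λ] : Type := ℝ ⊗[ℤ] Λ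

/-- The lattice `Λ` embedded in `V = ℝ ⊗_ℤ Λ` as `x ↦ 1 ⊗ x`. -/
noncomputable def latticeSub (Λ : Type) [AddCommGroup Λ] : AddSubgroup (VR Λ) :=
  (((TensorProduct.mk ℤ ℝ Λ) 1).toAddMonoidHom).range

/-- The torus `T = (Λ ⊗ ℝ)/Λ`. -/
abbrev TorusT (Λ : Type) [AddCommGroup Λ] : Type := VR Λ ⧸ latticeSub Λ

/-- The linear extension of `σ : Λ → Λ` to `V = ℝ ⊗_ℤ Λ`. -/
noncomputable def σV (Λ : Type) [AddCommGroup Λ] (σ : Λ →+ Λ) : VR Λ →+ VR Λ :=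
  (LinearMap.lTensor ℝ σ.toIntLinearMap).toAddMonoidHom

theorem σV_lattice (Λ : Type) [AddCommGroup Λ] (σ : Λ →+ Λ) :
    latticeSub Λ ≤ (latticeSub Λ).comap (σV Λ σ) := by
  rintro _ ⟨x, rfl⟩
  exact ⟨σ x, by simp [σV, TensorProduct.mk_apply, LinearMap.lTensor_tmul]⟩

/-- The linear involution on the torus `T = (Λ ⊗ ℝ)/Λ` induced by `σ : Λ → Λ`. -/
noncomputable def σT (Λ : Type) [AddCommGroup Λ] (σ : Λ →+ Λ) : TorusT Λ →+ TorusT Λ :=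
  QuotientAddGroup.map (latticeSub Λ) (latticeSub Λ) (σV Λ σ) (σV_lattice Λ σ)

/-- The circle `ℝ/ℤ`. -/
abbrev 𝕊 : Type := AddCircle (1 : ℝ)

/-!
The linear part is classified first. If `Λ` is the sum of the `±1`-eigenlattices of `σ`,
indecomposability forces `σ = ±1`; then every rank-one coordinate projection is equivariant, so
`Λ ≅ ℤ`. Otherwise take `z` outside that sum: `z ± σ z` are not divisible by `2`, and since the
eigenlattices are saturated (hence direct summands) one can shift `z` by elements of them to get a
functional `φ` with `φ z = 1` and `φ (σ z) = 0`. The projection `x ↦ φ x • z + φ (σ x) • σ z` is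
then equivariant and nonzero, hence the identity, and `Λ ≅ ℤ²` with `σ` the swap.

Tori are functorial in the lattice, so `σ` becomes `t ↦ t`, `t ↦ -t` on `ℝ/ℤ` or the swap on
`(ℝ/ℤ)²`. It remains to normalise the translation `c`: in the trivial case `c + c = 0` gives
`c ∈ {0, 1/2}`, in the other two cases moving the origin by `d` removes `c`.
-/

lemma Module.End.mem_eigenspace_of_smul_mem {R M : Type*} [CommRing R] [IsDomain R]
    [AddCommGroup M] [Module R M] [Module.IsTorsionFree R M] {f : Module.End R M} {μ r : R}
    {x : M} (hr : r ≠ 0) (h : r • x ∈ f.eigenspace μ) : x ∈ f.eigenspace μ := by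
  rw [Module.End.mem_eigenspace_iff, map_smul, smul_comm] at h
  rw [Module.End.mem_eigenspace_iff]
  exact (smul_right_inj hr).1 h

lemma Submodule.exists_extend_of_smul_mem {R M N : Type*} [CommRing R] [IsDomain R]
    [IsPrincipalIdealRing R] [AddCommGroup M] [Module R M] [Module.Finite R M] [AddCommGroup N]
    [Module R N] (A : Submodule R M) (hA : ∀ (r : R) (x : M), r ≠ 0 → r • x ∈ A → x ∈ A)
    (ψ : A →ₗ[R] N) : ∃ φ : M →ₗ[R] N, ∀ a : A, φ a = ψ a := by
  have : Module.IsTorsionFree R (M ⧸ A) := .of_smul_eq_zero fun r q hq => by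
    induction q using Submodule.Quotient.induction_on with | H x => ?_
    rw [← Submodule.Quotient.mk_smul, Submodule.Quotient.mk_eq_zero] at hq
    rw [Submodule.Quotient.mk_eq_zero]
    by_cases hr : r = 0
    · exact Or.inl hr
    · exact Or.inr (hA r x hr hq)
  -- `M ⧸ A` is finitely generated and torsion-free, hence free, so `A.mkQ` splits.
  obtain ⟨ρ, hρ⟩ := A.mkQ.exists_rightInverse_of_surjective A.range_mkQ
  let p : M →ₗ[R] A := (LinearMap.id - ρ ∘ₗ A.mkQ).codRestrict A fun x => by
    rw [← Submodule.Quotient.mk_eq_zero]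
    simpa [sub_eq_zero] using (LinearMap.congr_fun hρ (A.mkQ x)).symm
  refine ⟨ψ ∘ₗ p, fun a => ?_⟩
  have hpa : p a = a := Subtype.ext (by simp [p, (Submodule.Quotient.mk_eq_zero A).2 a.2])
  rw [LinearMap.comp_apply, hpa]

lemma Module.Free.exists_add_two_smul_eq_one {M : Type*} [AddCommGroup M] [Module.Free ℤ M]
    {a : M} (ha : ∀ y : M, a ≠ (2 : ℤ) • y) :
    ∃ α : M, ∃ ψ : M →ₗ[ℤ] ℤ, ψ (a + (2 : ℤ) • α) = 1 := by
  let b := Module.Free.chooseBasis ℤ M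
  obtain ⟨i, hi⟩ : ∃ i, ¬ 2 ∣ b.repr a i := by
    by_contra! h
    refine ha (b.repr.symm ((b.repr a).mapRange (· / 2) (by simp))) (b.repr.injective ?_)
    ext i
    simp [Int.mul_ediv_cancel' (h i)]
  refine ⟨-(b.repr a i / 2) • b i, b.coord i, ?_⟩
  simp
  omega

lemma Submodule.exists_mem_add_two_smul_eq_one {Λ : Type*} [AddCommGroup Λ] [Module.Free ℤ Λ]
    [Module.Finite ℤ Λ] (A : Submodule ℤ Λ) (hA : ∀ (r : ℤ) (x : Λ), r ≠ 0 → r • x ∈ A → x ∈ A)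
    {a : Λ} (ha : a ∈ A) (h2 : ∀ y : Λ, a ≠ (2 : ℤ) • y) :
    ∃ α ∈ A, ∃ φ : Λ →ₗ[ℤ] ℤ, φ (a + (2 : ℤ) • α) = 1 := by
  obtain ⟨α, ψ, hψ⟩ := Module.Free.exists_add_two_smul_eq_one (a := (⟨a, ha⟩ : A))
    fun y hy => h2 y (congrArg Subtype.val hy)
  obtain ⟨φ, hφ⟩ := A.exists_extend_of_smul_mem hA ψ
  exact ⟨α, α.2, φ, by simpa using (hφ (⟨a, ha⟩ + (2 : ℤ) • α)).trans hψ⟩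

section Involution

variable {Λ : Type} [AddCommGroup Λ] {σ : Λ →+ Λ}

lemma exists_apply_eq_one_apply_eq_zero (hinv : ∀ x, σ (σ x) = x) (φ₁ φ₂ : Λ →+ ℤ) {z : Λ}
    (h₁ : φ₁ z + φ₁ (σ z) = 1) (h₂ : φ₂ z - φ₂ (σ z) = 1) :
    ∃ φ : Λ →+ ℤ, φ z = 1 ∧ φ (σ z) = 0 :=
  ⟨φ₁ + φ₁ (σ z) • (φ₂ - φ₂.comp σ), by simp; linear_combination h₁ + φ₁ (σ z) * h₂,
    by simp [hinv]; linear_combination -φ₁ (σ z) * h₂⟩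

lemma exists_apply_eq_one_apply_eq_zero_of_notMem_sup [Module.Free ℤ Λ] [Module.Finite ℤ Λ]
    (hinv : ∀ x, σ (σ x) = x) {z : Λ}
    (hz : z ∉ Module.End.eigenspace σ.toIntLinearMap 1 ⊔
      Module.End.eigenspace σ.toIntLinearMap (-1)) :
    ∃ z' : Λ, ∃ φ : Λ →+ ℤ, φ z' = 1 ∧ φ (σ z') = 0 := by
  set A := Module.End.eigenspace σ.toIntLinearMap 1
  set B := Module.End.eigenspace σ.toIntLinearMap (-1)
  have hA : ∀ x, x ∈ A ↔ σ x = x := fun x => by simp [A]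
  have hB : ∀ x, x ∈ B ↔ σ x = -x := fun x => by simp [B]
  have hsatA : ∀ (r : ℤ) x, r ≠ 0 → r • x ∈ A → x ∈ A := fun _ _ hr =>
    Module.End.mem_eigenspace_of_smul_mem hr
  have hsatB : ∀ (r : ℤ) x, r ≠ 0 → r • x ∈ B → x ∈ B := fun _ _ hr =>
    Module.End.mem_eigenspace_of_smul_mem hr
  have haA : z + σ z ∈ A := (hA _).2 (by rw [map_add, hinv, add_comm])
  have hbB : z - σ z ∈ B := (hB _).2 (by rw [map_sub, hinv, neg_sub])
  have ha : ∀ y : Λ, z + σ z ≠ (2 : ℤ) • y := by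
    intro y hy
    have hyA : σ y = y := (hA y).1 (hsatA 2 y two_ne_zero (hy ▸ haA))
    refine hz (Submodule.mem_sup.2 ⟨y, (hA y).2 hyA, z - y, (hB _).2 ?_, by abel⟩)
    have hσz : σ z = (2 : ℤ) • y - z := by rw [← hy]; abel
    rw [map_sub, hyA, hσz, two_smul]
    abel
  have hb : ∀ y : Λ, z - σ z ≠ (2 : ℤ) • y := by
    intro y hy
    have hyB : σ y = -y := (hB y).1 (hsatB 2 y two_ne_zero (hy ▸ hbB))
    refine hz (Submodule.mem_sup.2 ⟨z - y, (hA _).2 ?_, y, (hB y).2 hyB, by abel⟩)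
    have hσz : σ z = z - (2 : ℤ) • y := by rw [← hy]; abel
    rw [map_sub, hyB, hσz, two_smul]
    abel
  obtain ⟨α, hα, φ₁, hφ₁⟩ := A.exists_mem_add_two_smul_eq_one hsatA haA ha
  obtain ⟨β, hβ, φ₂, hφ₂⟩ := B.exists_mem_add_two_smul_eq_one hsatB hbB hb
  have hσz' : σ (z + α + β) = σ z + α - β := by
    rw [map_add, map_add, (hA α).1 hα, (hB β).1 hβ]
    abel
  refine ⟨z + α + β,
    exists_apply_eq_one_apply_eq_zero hinv φ₁.toAddMonoidHom φ₂.toAddMonoidHom ?_ ?_⟩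
  · rw [← hφ₁, hσz']
    simp only [LinearMap.toAddMonoidHom_coe, ← map_add]
    congr 1
    abel
  · rw [← hφ₂, hσz']
    simp only [LinearMap.toAddMonoidHom_coe, ← map_sub]
    congr 1
    abel

end Involution

section Indecomposable

variable {Λ : Type} [AddCommGroup Λ]

def IsIndecomposable (σ : Λ →+ Λ) : Prop :=
  ∀ A B : AddSubgroup Λ, (∀ x ∈ A, σ x ∈ A) → (∀ x ∈ B, σ x ∈ B) → IsCompl A B → A = ⊥ ∨ B = ⊥

lemma AddMonoidHom.isCompl_range_ker_of_idempotent (Φ : Λ →+ Λ) (h : ∀ x, Φ (Φ x) = Φ x) :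
    IsCompl Φ.range Φ.ker := by
  constructor
  · rw [AddSubgroup.disjoint_def]
    rintro _ ⟨y, rfl⟩ hy
    rwa [AddMonoidHom.mem_ker, h] at hy
  · rw [codisjoint_iff_le_sup]
    intro x _
    exact AddSubgroup.mem_sup.mpr ⟨Φ x, ⟨x, rfl⟩, x - Φ x, by simp [h], by abel⟩

lemma IsIndecomposable.apply_eq_of_idempotent {σ Φ : Λ →+ Λ} (hσ : IsIndecomposable σ)
    (hidem : ∀ x, Φ (Φ x) = Φ x) (hcomm : ∀ x, Φ (σ x) = σ (Φ x)) {v : Λ} (hv : Φ v ≠ 0)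
    (x : Λ) : Φ x = x := by
  rcases hσ _ _ (by rintro _ ⟨y, rfl⟩; exact ⟨σ y, hcomm y⟩)
    (fun y hy => by rw [AddMonoidHom.mem_ker, hcomm, AddMonoidHom.mem_ker.mp hy, map_zero])
    (Φ.isCompl_range_ker_of_idempotent hidem) with h | h
  · exact absurd (h ▸ ⟨v, rfl⟩ : Φ v ∈ (⊥ : AddSubgroup Λ)) hv
  · have : Φ x - x ∈ Φ.ker := by simp [hidem]
    rwa [h, AddSubgroup.mem_bot, sub_eq_zero] at this

lemma IsIndecomposable.exists_addEquiv_of_section {M : Type} [AddCommGroup M] [Nontrivial M]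
    {σ : Λ →+ Λ} {τ : M →+ M} (hσ : IsIndecomposable σ) (F : Λ →+ M) (s : M →+ Λ)
    (hFs : ∀ m, F (s m) = m) (hF : ∀ x, F (σ x) = τ (F x)) (hs : ∀ m, s (τ m) = σ (s m)) :
    ∃ e : Λ ≃+ M, ∀ x, e (σ x) = τ (e x) := by
  obtain ⟨m, hm⟩ := exists_ne (0 : M)
  have hsF : ∀ x, s (F x) = x := hσ.apply_eq_of_idempotent (Φ := s.comp F)
    (fun x => by simp [hFs]) (fun x => by simp [hF, hs]) (v := s m)
    (by rw [AddMonoidHom.comp_apply, hFs]; exact fun h => hm (by rw [← hFs m, h, map_zero]))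
  exact ⟨F.toAddEquiv s (AddMonoidHom.ext hsF) (AddMonoidHom.ext hFs), hF⟩

lemma IsIndecomposable.exists_addEquiv_int_of_eq_smul [Module.Free ℤ Λ] [Nontrivial Λ]
    {σ : Λ →+ Λ} (hσ : IsIndecomposable σ) (ε : ℤ) (hε : ∀ x, σ x = ε • x) :
    ∃ e : Λ ≃+ ℤ, ∀ x, e (σ x) = ε • e x := by
  let b := Module.Free.chooseBasis ℤ Λ
  obtain ⟨i⟩ := b.index_nonempty
  exact hσ.exists_addEquiv_of_section (τ := ε • AddMonoidHom.id ℤ) (b.coord i).toAddMonoidHom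
    (zmultiplesHom Λ (b i)) (fun m => by simp) (fun x => by simp [hε])
    (fun m => by simp [hε, mul_smul])

lemma IsIndecomposable.exists_addEquiv_prod_swap {σ : Λ →+ Λ} (hσ : IsIndecomposable σ)
    (hinv : ∀ x, σ (σ x) = x) {φ : Λ →+ ℤ} {z : Λ} (h1 : φ z = 1) (h0 : φ (σ z) = 0) :
    ∃ e : Λ ≃+ ℤ × ℤ, ∀ x, e (σ x) = (e x).swap :=
  hσ.exists_addEquiv_of_section (τ := (AddEquiv.prodComm : ℤ × ℤ ≃+ ℤ × ℤ).toAddMonoidHom)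
    (φ.prod (φ.comp σ)) ((zmultiplesHom Λ z).coprod (zmultiplesHom Λ (σ z)))
    (fun m => by simp [h1, h0, hinv]) (fun x => by simp [hinv])
    (fun m => by simp [hinv, add_comm])

lemma IsIndecomposable.eq_id_or_eq_neg_of_eigenspace_sup_eq_top [Module.IsTorsionFree ℤ Λ]
    {σ : Λ →+ Λ} (hσ : IsIndecomposable σ)
    (h : Module.End.eigenspace σ.toIntLinearMap 1 ⊔
      Module.End.eigenspace σ.toIntLinearMap (-1) = ⊤) :
    (∀ x, σ x = x) ∨ (∀ x, σ x = -x) := by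
  set A := Module.End.eigenspace σ.toIntLinearMap 1
  set B := Module.End.eigenspace σ.toIntLinearMap (-1)
  have hA : ∀ x, x ∈ A.toAddSubgroup ↔ σ x = x := fun x => by simp [A]
  have hB : ∀ x, x ∈ B.toAddSubgroup ↔ σ x = -x := fun x => by simp [B]
  have hcompl : IsCompl A.toAddSubgroup B.toAddSubgroup :=
    AddSubgroup.toIntSubmodule.symm.isCompl
      ⟨Module.End.eigenspaces_iSupIndep _ |>.pairwiseDisjoint (by decide : (1 : ℤ) ≠ -1),
        codisjoint_iff.2 h⟩
  rcases hσ _ _ (fun x hx => (hA _).2 (by rw [(hA x).1 hx]; exact (hA x).1 hx))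
    (fun x hx => (hB _).2 (by rw [(hB x).1 hx, map_neg, (hB x).1 hx])) hcompl with h0 | h0
  · have hB' := eq_top_of_bot_isCompl (h0 ▸ hcompl)
    exact Or.inr fun x => (hB x).1 (hB' ▸ AddSubgroup.mem_top x)
  · have hA' := eq_top_of_isCompl_bot (h0 ▸ hcompl)
    exact Or.inl fun x => (hA x).1 (hA' ▸ AddSubgroup.mem_top x)

theorem IsIndecomposable.classification [Module.Free ℤ Λ] [Module.Finite ℤ Λ] [Nontrivial Λ]
    {σ : Λ →+ Λ} (hσ : IsIndecomposable σ) (hinv : ∀ x, σ (σ x) = x) :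
    (∃ e : Λ ≃+ ℤ, ∀ x, e (σ x) = e x) ∨ (∃ e : Λ ≃+ ℤ, ∀ x, e (σ x) = -e x) ∨
      ∃ e : Λ ≃+ ℤ × ℤ, ∀ x, e (σ x) = (e x).swap := by
  by_cases h : Module.End.eigenspace σ.toIntLinearMap 1 ⊔
      Module.End.eigenspace σ.toIntLinearMap (-1) = ⊤
  · rcases hσ.eq_id_or_eq_neg_of_eigenspace_sup_eq_top h with hid | hneg
    · obtain ⟨e, he⟩ := hσ.exists_addEquiv_int_of_eq_smul 1 (by simpa using hid)
      exact Or.inl ⟨e, by simpa using he⟩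
    · obtain ⟨e, he⟩ := hσ.exists_addEquiv_int_of_eq_smul (-1) (by simpa using hneg)
      exact Or.inr (Or.inl ⟨e, by simpa using he⟩)
  · obtain ⟨z, -, hz⟩ := SetLike.exists_of_lt (lt_top_iff_ne_top.2 h)
    obtain ⟨z', φ, h1, h0⟩ := exists_apply_eq_one_apply_eq_zero_of_notMem_sup hinv hz
    exact Or.inr (Or.inr (hσ.exists_addEquiv_prod_swap hinv h1 h0))

end Indecomposable

namespace TorusT

variable {Λ Λ' Λ'' : Type} [AddCommGroup Λ] [AddCommGroup Λ'] [AddCommGroup Λ'']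

noncomputable def map (f : Λ →+ Λ') : TorusT Λ →+ TorusT Λ' :=
  QuotientAddGroup.map _ _ (LinearMap.lTensor ℝ f.toIntLinearMap).toAddMonoidHom <| by
    rintro _ ⟨x, rfl⟩
    exact ⟨f x, by simp [TensorProduct.mk_apply]⟩

lemma map_mk (f : Λ →+ Λ') (v : VR Λ) :
    map f (v : TorusT Λ) = (LinearMap.lTensor ℝ f.toIntLinearMap v : TorusT Λ') := rfl

lemma _root_.σT_eq_map (σ : Λ →+ Λ) : σT Λ σ = map σ := rfl

@[simp] lemma map_id : map (AddMonoidHom.id Λ) = AddMonoidHom.id (TorusT Λ) := by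
  ext v
  exact congrArg QuotientAddGroup.mk (LinearMap.lTensor_id_apply _ _ v)

lemma map_comp (g : Λ' →+ Λ'') (f : Λ →+ Λ') : map (g.comp f) = (map g).comp (map f) := by
  ext v
  simp [map_mk, ← LinearMap.lTensor_comp_apply]
  rfl

lemma map_add (f g : Λ →+ Λ') : map (f + g) = map f + map g := by
  ext v
  have h : (f + g).toIntLinearMap = f.toIntLinearMap + g.toIntLinearMap := rfl
  simp only [AddMonoidHom.comp_apply, QuotientAddGroup.mk'_apply, AddMonoidHom.add_apply,
    map_mk, h, LinearMap.lTensor_add, LinearMap.add_apply, QuotientAddGroup.mk_add]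

noncomputable def mapHom : (Λ →+ Λ') →+ (TorusT Λ →+ TorusT Λ') :=
  AddMonoidHom.mk' map map_add

lemma map_neg (f : Λ →+ Λ') : map (-f) = -map f :=
  _root_.map_neg (mapHom (Λ := Λ) (Λ' := Λ')) f

lemma map_zero : map (0 : Λ →+ Λ') = 0 :=
  _root_.map_zero (mapHom (Λ := Λ) (Λ' := Λ'))

noncomputable def congr (e : Λ ≃+ Λ') : TorusT Λ ≃+ TorusT Λ' :=
  (map e.toAddMonoidHom).toAddEquiv (map e.symm.toAddMonoidHom)
    (by rw [← map_comp]; simp) (by rw [← map_comp]; simp)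

lemma congr_apply (e : Λ ≃+ Λ') (t : TorusT Λ) : congr e t = map e.toAddMonoidHom t := rfl

lemma congr_σT {σ : Λ →+ Λ} {σ' : Λ' →+ Λ'} (e : Λ ≃+ Λ') (he : ∀ x, e (σ x) = σ' (e x))
    (t : TorusT Λ) : congr e (σT Λ σ t) = σT Λ' σ' (congr e t) := by
  simp only [congr_apply, σT_eq_map, ← AddMonoidHom.comp_apply, ← map_comp]
  congr 2
  ext x
  exact he x

noncomputable def prodEquiv : TorusT (Λ × Λ') ≃+ TorusT Λ × TorusT Λ' :=
  ((map (AddMonoidHom.fst Λ Λ')).prod (map (AddMonoidHom.snd Λ Λ'))).toAddEquiv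
    ((map (AddMonoidHom.inl Λ Λ')).coprod (map (AddMonoidHom.inr Λ Λ')))
    (by
      have h : (AddMonoidHom.inl Λ Λ').comp (AddMonoidHom.fst Λ Λ') +
          (AddMonoidHom.inr Λ Λ').comp (AddMonoidHom.snd Λ Λ') = AddMonoidHom.id _ := by
        ext <;> simp
      ext t
      simp only [AddMonoidHom.comp_apply, AddMonoidHom.prod_apply, AddMonoidHom.coprod_apply,
        ← AddMonoidHom.comp_apply (map _) (map _), ← map_comp, ← AddMonoidHom.add_apply,
        ← map_add, h, map_id])
    (by
      ext t <;>
      simp [← AddMonoidHom.comp_apply (map _) (map _), ← map_comp, map_zero])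

lemma prodEquiv_map_prodComm (t : TorusT (Λ × Λ)) :
    prodEquiv (map (AddEquiv.prodComm : Λ × Λ ≃+ Λ × Λ).toAddMonoidHom t) =
      (prodEquiv t).swap := by
  have hfst : (map (AddMonoidHom.fst Λ Λ)).comp (map AddEquiv.prodComm.toAddMonoidHom) =
      map (AddMonoidHom.snd Λ Λ) := by
    rw [← map_comp]; rfl
  have hsnd : (map (AddMonoidHom.snd Λ Λ)).comp (map AddEquiv.prodComm.toAddMonoidHom) =
      map (AddMonoidHom.fst Λ Λ) := by
    rw [← map_comp]; rfl
  exact Prod.ext (DFunLike.congr_fun hfst t) (DFunLike.congr_fun hsnd t)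

noncomputable def intEquiv : TorusT ℤ ≃+ 𝕊 :=
  QuotientAddGroup.congr _ _ (TensorProduct.rid ℤ ℝ).toAddEquiv <| by
    rw [latticeSub, AddMonoidHom.map_range, ← AddSubgroup.range_zmultiplesHom]
    congr 1

end TorusT

section CircleModels

variable {Λ : Type} [AddCommGroup Λ] {σ : Λ →+ Λ}

lemma exists_addEquiv_circle_of_fixed (e : Λ ≃+ ℤ) (he : ∀ x, e (σ x) = e x) :
    ∃ L : TorusT Λ ≃+ 𝕊, ∀ t, L (σT Λ σ t) = L t :=
  ⟨(TorusT.congr e).trans TorusT.intEquiv, fun t => by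
    rw [AddEquiv.trans_apply, AddEquiv.trans_apply,
      TorusT.congr_σT (σ' := AddMonoidHom.id ℤ) e he, σT_eq_map, TorusT.map_id]
    rfl⟩

lemma exists_addEquiv_circle_of_neg (e : Λ ≃+ ℤ) (he : ∀ x, e (σ x) = -e x) :
    ∃ L : TorusT Λ ≃+ 𝕊, ∀ t, L (σT Λ σ t) = -L t :=
  ⟨(TorusT.congr e).trans TorusT.intEquiv, fun t => by
    rw [AddEquiv.trans_apply, AddEquiv.trans_apply,
      TorusT.congr_σT (σ' := -AddMonoidHom.id ℤ) e he, σT_eq_map, TorusT.map_neg,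
      TorusT.map_id, AddMonoidHom.neg_apply, map_neg]
    rfl⟩

lemma exists_addEquiv_circle_prod_of_swap (e : Λ ≃+ ℤ × ℤ) (he : ∀ x, e (σ x) = (e x).swap) :
    ∃ L : TorusT Λ ≃+ 𝕊 × 𝕊, ∀ t, L (σT Λ σ t) = (L t).swap :=
  ⟨((TorusT.congr e).trans TorusT.prodEquiv).trans
      (TorusT.intEquiv.prodCongr TorusT.intEquiv), fun t => by
    rw [AddEquiv.trans_apply, AddEquiv.trans_apply, AddEquiv.trans_apply, AddEquiv.trans_apply,
      TorusT.congr_σT (σ' := (AddEquiv.prodComm : ℤ × ℤ ≃+ ℤ × ℤ).toAddMonoidHom) e he,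
      σT_eq_map, TorusT.prodEquiv_map_prodComm]
    rfl⟩

end CircleModels

lemma AddCircle.eq_zero_or_eq_half_of_add_self {𝕜 : Type*} [Field 𝕜] [LinearOrder 𝕜]
    [IsStrictOrderedRing 𝕜] {p : 𝕜} [Fact (0 < p)] {x : AddCircle p} (h : x + x = 0) :
    x = 0 ∨ x = ((p / 2 : 𝕜) : AddCircle p) := by
  obtain ⟨m, hm, rfl⟩ := (AddCircle.nsmul_eq_zero_iff (p := p) two_pos).mp (by rwa [two_nsmul])
  interval_cases m
  · simp
  · right; congr 1; ring

/-- Let `T = (Λ ⊗ ℝ)/Λ` be a torus built from a finitely generated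
free abelian group `Λ` with involution `σ` that is *indecomposable* as an integral
representation of `ℤ/2`, and let `τ t = σ t + c` (with `c + σ c = 0`) be an affine
involution on `T` with linear part `σ`.  Then, up to `ℤ/2`-equivariant affine
isomorphism, `(T, τ)` is one of exactly four types:
(1) `ℝ/ℤ` with `σ t = t`; (2) `ℝ/ℤ` with `σ t = t + 1/2`; (3) `ℝ/ℤ` with `σ t = -t`;
(4) `ℝ²/ℤ²` with `σ (t₁, t₂) = (t₂, t₁)`. -/
theorem stmt10 (Λ : Type) [AddCommGroup Λ] [Module.Free ℤ Λ] [Module.Finite ℤ Λ]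
    [Nontrivial Λ]
    (σ : Λ →+ Λ) (hσ : ∀ x, σ (σ x) = x)
    (hindec : ∀ A B : AddSubgroup Λ, (∀ x ∈ A, σ x ∈ A) → (∀ x ∈ B, σ x ∈ B) →
      IsCompl A B → A = ⊥ ∨ B = ⊥)
    (c : TorusT Λ) (hc : c + σT Λ σ c = 0) :
    (∃ (L : TorusT Λ ≃+ 𝕊) (d : 𝕊),
        ∀ t, L (σT Λ σ t + c) + d = L t + d) ∨
    (∃ (L : TorusT Λ ≃+ 𝕊) (d : 𝕊),
        ∀ t, L (σT Λ σ t + c) + d = (L t + d) + (((1 : ℝ)/2 : ℝ) : 𝕊)) ∨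
    (∃ (L : TorusT Λ ≃+ 𝕊) (d : 𝕊),
        ∀ t, L (σT Λ σ t + c) + d = -(L t + d)) ∨
    (∃ (L : TorusT Λ ≃+ 𝕊 × 𝕊) (d : 𝕊 × 𝕊),
        ∀ t, L (σT Λ σ t + c) + d = Prod.swap (L t + d)) := by
  rcases IsIndecomposable.classification hindec hσ with ⟨e, he⟩ | ⟨e, he⟩ | ⟨e, he⟩
  · obtain ⟨L, hL⟩ := exists_addEquiv_circle_of_fixed e he
    have hLc : L c + L c = 0 := by simpa [hL] using congrArg L hc
    rcases AddCircle.eq_zero_or_eq_half_of_add_self hLc with h0 | h0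
    · exact Or.inl ⟨L, 0, fun t => by simp [hL, h0]⟩
    · exact Or.inr (Or.inl ⟨L, 0, fun t => by simp [hL, h0]⟩)
  · obtain ⟨L, hL⟩ := exists_addEquiv_circle_of_neg e he
    obtain ⟨d, hd : (2 : ℤ) • d = -L c⟩ := DivisibleBy.surjective_smul 𝕊 ℤ two_ne_zero (-L c)
    refine Or.inr (Or.inr (Or.inl ⟨L, d, fun t => ?_⟩))
    rw [map_add, hL, ← neg_neg (L c), ← hd, two_smul]
    abel
  · obtain ⟨L, hL⟩ := exists_addEquiv_circle_prod_of_swap e he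
    have hLc : L c + (L c).swap = 0 := by simpa [hL] using congrArg L hc
    refine Or.inr (Or.inr (Or.inr ⟨L, (-(L c).1, 0), fun t => ?_⟩))
    have h2 : (L c).2 = -(L c).1 := eq_neg_of_add_eq_zero_left (congrArg Prod.snd hLc)
    ext <;> simp [hL, h2]
end

section
/- Let m : {0,1}³ → S¹ be defined by m(0,1,0) = m(1,0,1) = -1 and m(i,j,k) = 1 otherwise. Then m is a 2-cocycle on the covering {0,1} → pt: for all i,j,k,l ∈ {0,1}, m(j,k,l)·m(i,k,l)^{-1}·m(i,j,l)·m(i,j,k)^{-1} = 1, and it is equivariant for the swap involution: m(1-i, 1-j, 1-k) = conj(m(i,j,k)). Moreover m is not a coboundary of an equivariant 1-cochain: there is no t : {0,1}² → S¹ with t(1-i,1-j) = conj(t(i,j)) and m(i,j,k) = t(j,k)·t(i,k)^{-1}·t(i,j). -/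
/-!
Over ℂ the cochain `m` is the Čech coboundary of `s i j = if i = j then 1 else I`, hence a
cocycle; `s` is not equivariant because `conj I = -I`. For an equivariant unit-norm `t` the
product `δt(0,1,0) · δt(0,0,0) = t 1 0 * t 0 1 = conj (t 0 1) * t 0 1 = |t 0 1|²` equals `1`,
whereas for `m` it is `-1`.
-/

/-- The Čech 2-cochain on the two-element cover `{0,1} → pt` given by
`m 0 1 0 = m 1 0 1 = -1` and `m i j k = 1` otherwise. -/
noncomputable def m18 : Fin 2 → Fin 2 → Fin 2 → ℂ :=
  fun i j k => if i ≠ j ∧ j ≠ k then -1 else 1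

open ComplexConjugate

def cechCoboundary {ι G : Type*} [DivInvMonoid G] (t : ι → ι → G) (i j k : ι) : G :=
  t j k * (t i k)⁻¹ * t i j

theorem cechCoboundary_cocycle {ι K : Type*} [Field K] {t : ι → ι → K} (ht : ∀ i j, t i j ≠ 0)
    (i j k l : ι) :
    cechCoboundary t j k l * (cechCoboundary t i k l)⁻¹ * cechCoboundary t i j l *
      (cechCoboundary t i j k)⁻¹ = 1 := by
  simp only [cechCoboundary]
  field_simp [ht]

theorem cechCoboundary_self {ι K : Type*} [DivisionRing K] {t : ι → ι → K} {i : ι}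
    (ht : t i i ≠ 0) : cechCoboundary t i i i = t i i := by
  simp [cechCoboundary, ht]

theorem cechCoboundary_zero_one_zero_mul_self_of_norm_eq_one {t : Fin 2 → Fin 2 → ℂ}
    (hnorm : ∀ i j, ‖t i j‖ = 1) (hequiv : t 1 0 = conj (t 0 1)) :
    cechCoboundary t 0 1 0 * cechCoboundary t 0 0 0 = 1 := by
  have h00 : t 0 0 ≠ 0 := norm_ne_zero_iff.mp (by simp [hnorm])
  rw [cechCoboundary_self h00, cechCoboundary, mul_right_comm _ (t 0 1),
    inv_mul_cancel_right₀ h00, hequiv, Complex.conj_mul', hnorm]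
  simp

theorem m18_eq_cechCoboundary :
    m18 = cechCoboundary fun i j => if i = j then 1 else Complex.I := by
  ext i j k
  fin_cases i <;> fin_cases j <;> fin_cases k <;> simp [m18, cechCoboundary]

theorem conj_m18 (i j k : Fin 2) : conj (m18 i j k) = m18 i j k := by
  unfold m18; split_ifs <;> simp

theorem m18_one_sub (i j k : Fin 2) : m18 (1 - i) (1 - j) (1 - k) = m18 i j k := by
  simp only [m18, ne_eq, sub_right_inj]

/-- The cochain `m` with `m 0 1 0 = m 1 0 1 = -1` and `m i j k = 1`
otherwise is an equivariant Čech 2-cocycle for the swap involution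
(`m (1-i) (1-j) (1-k) = conj (m i j k)`), and it is not the coboundary of any
equivariant `S¹`-valued 1-cochain `t` (where `t (1-i) (1-j) = conj (t i j)` and
`|t i j| = 1`). -/
theorem stmt18 :
    (∀ i j k l : Fin 2,
      m18 j k l * (m18 i k l)⁻¹ * m18 i j l * (m18 i j k)⁻¹ = 1) ∧
    (∀ i j k : Fin 2, m18 (1 - i) (1 - j) (1 - k) = starRingEnd ℂ (m18 i j k)) ∧
    ¬ ∃ t : Fin 2 → Fin 2 → ℂ,
        (∀ i j, ‖t i j‖ = 1) ∧
        (∀ i j, t (1 - i) (1 - j) = starRingEnd ℂ (t i j)) ∧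
        (∀ i j k, m18 i j k = t j k * (t i k)⁻¹ * t i j) := by
  refine ⟨?_, fun i j k => by rw [m18_one_sub, conj_m18], ?_⟩
  · rw [m18_eq_cechCoboundary]
    exact cechCoboundary_cocycle fun i j => by split_ifs <;> simp
  · rintro ⟨t, hnorm, hequiv, hcob⟩
    have hm : m18 = cechCoboundary t := funext₃ hcob
    have key := cechCoboundary_zero_one_zero_mul_self_of_norm_eq_one hnorm
      (by simpa using hequiv 0 1)
    rw [← hm] at key
    norm_num [m18] at key
end
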